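/- arXiv:2501.04544 — 2 statements merged into one kernel-verified Lean document; each statement's English description precedes it below -/
import Mathlib

section
/- In ℝ², let ξ be nonzero and ξ⊥ its 90-degree rotation. Let f be a symmetric m-multilinear form on ℝ². If f(ξ⊥,…,ξ⊥) · f(w₁,…,w_m) = 0 for all choices of w_i ∈ {ξ, ξ⊥} (ellipticity pairing with the symbol ξ⊥⊗⋯⊗ξ⊥), and f contracted with ξ in any one slot vanishes (solenoidal condition on the symbol level), then f(w₁,…,w_m) = 0 for every w₁,…,w_m ∈ ℝ², hence f = 0. -/
/-!
Since `ξ ≠ 0`, the vectors `ξ` and `ξ⊥` form a basis of `ℝ²`, so `f` is determined by its values on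
tuples drawn from `{ξ, ξ⊥}`. By symmetry any such tuple containing `ξ` can be permuted to put `ξ`
in the last slot, where the solenoidal condition kills it; the remaining tuple `(ξ⊥, …, ξ⊥)` is
killed by the pairing condition, which for it reads `f(ξ⊥, …, ξ⊥)² = 0`.
-/

open Module

namespace MultilinearMap

variable {R M N ι : Type*} [Semiring R] [AddCommMonoid M] [Module R M]
  [AddCommMonoid N] [Module R N] [DecidableEq ι]

theorem map_eq_zero_of_apply_eq_of_perm_invariant (f : MultilinearMap R (fun _ : ι => M) N)
    (hsym : ∀ (σ : Equiv.Perm ι) (v : ι → M), f (v ∘ σ) = f v) {x : M} {j : ι}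
    (hj : ∀ v : ι → M, f (Function.update v j x) = 0) {v : ι → M} {i : ι} (hi : v i = x) :
    f v = 0 := by
  have hswap : (v ∘ Equiv.swap i j) j = x := by simp [hi]
  rw [← hsym (Equiv.swap i j) v, ← Function.update_eq_self j (v ∘ Equiv.swap i j), hswap]
  exact hj _

end MultilinearMap

theorem linearIndependent_pair_rotate {ξ : ℝ × ℝ} (hξ : ξ ≠ 0) :
    LinearIndependent ℝ ![ξ, ((-ξ.2, ξ.1) : ℝ × ℝ)] := by
  rw [LinearIndependent.pair_iff]
  intro s t hst
  have h1 : s * ξ.1 - t * ξ.2 = 0 := by simpa [sub_eq_add_neg] using congrArg Prod.fst hst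
  have h2 : s * ξ.2 + t * ξ.1 = 0 := by simpa using congrArg Prod.snd hst
  have hnorm : ξ.1 ^ 2 + ξ.2 ^ 2 ≠ 0 := by
    contrapose! hξ
    ext <;> simp <;> nlinarith [sq_nonneg ξ.1, sq_nonneg ξ.2]
  constructor
  · exact (mul_eq_zero.mp (by linear_combination ξ.1 * h1 + ξ.2 * h2 :
      s * (ξ.1 ^ 2 + ξ.2 ^ 2) = 0)).resolve_right hnorm
  · exact (mul_eq_zero.mp (by linear_combination ξ.1 * h2 - ξ.2 * h1 :
      t * (ξ.1 ^ 2 + ξ.2 ^ 2) = 0)).resolve_right hnorm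

noncomputable def basisRotatePair (ξ : ℝ × ℝ) (hξ : ξ ≠ 0) : Basis (Fin 2) ℝ (ℝ × ℝ) :=
  basisOfLinearIndependentOfCardEqFinrank (linearIndependent_pair_rotate hξ) (by simp)

@[simp]
theorem coe_basisRotatePair (ξ : ℝ × ℝ) (hξ : ξ ≠ 0) :
    ⇑(basisRotatePair ξ hξ) = ![ξ, ((-ξ.2, ξ.1) : ℝ × ℝ)] :=
  coe_basisOfLinearIndependentOfCardEqFinrank _ _

/-- Ellipticity of the principal symbol on solenoidal tensors: in ℝ² with
`ξ ≠ 0` and `ξ⊥` its 90° rotation, if a symmetric `m`-multilinear form `f`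
satisfies `f(ξ⊥,…,ξ⊥) ⬝ f(w₁,…,w_m) = 0` for all choices `wᵢ ∈ {ξ, ξ⊥}` and the
solenoidal condition (contraction with `ξ` in one slot vanishes), then
`f(w₁,…,w_m) = 0` for all `w`, i.e. `f = 0`. -/
theorem symbol_elliptic_on_solenoidal (m : ℕ) (hm : 1 ≤ m)
    (f : MultilinearMap ℝ (fun _ : Fin m => ℝ × ℝ) ℝ)
    (hsym : ∀ (σ : Equiv.Perm (Fin m)) (v : Fin m → ℝ × ℝ), f (v ∘ σ) = f v)
    (ξ : ℝ × ℝ) (hξ : ξ ≠ 0)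
    (hpair : ∀ w : Fin m → ℝ × ℝ,
      (∀ i, w i = ξ ∨ w i = ((-ξ.2, ξ.1) : ℝ × ℝ)) →
      f (fun _ => ((-ξ.2, ξ.1) : ℝ × ℝ)) * f w = 0)
    (hsol : ∀ v : Fin m → ℝ × ℝ,
      f (Function.update v ⟨m - 1, by omega⟩ ξ) = 0) :
    (∀ w : Fin m → ℝ × ℝ, f w = 0) ∧ f = 0 := by
  have hperp : f (fun _ => ((-ξ.2, ξ.1) : ℝ × ℝ)) = 0 :=
    mul_self_eq_zero.mp (hpair _ fun _ => Or.inr rfl)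
  have hf : f = 0 := by
    refine Basis.ext_multilinear (fun _ => basisRotatePair ξ hξ) fun v => ?_
    by_cases hξslot : ∃ i, v i = 0
    · obtain ⟨i, hi⟩ := hξslot
      exact f.map_eq_zero_of_apply_eq_of_perm_invariant hsym hsol (i := i) (by simp [hi])
    · have hv : v = fun _ => 1 := funext fun i => by grind
      simpa [hv] using hperp
  exact ⟨fun w => by simp [hf], hf⟩
end

section
/- With H as the 4×4 matrix [[0,0,ḃ_z,ḃ_w],[0,c,−ḃ_z+c a_z,−ḃ_w],[ḃ_z, −ḃ_z+c a_z, c(a_z²+b_z²), c b_z b_w],[ḃ_w, −ḃ_w, c b_z b_w, c b_w²]], the coefficient of λ² in det(λI − H) equals −2(ḃ_z² + ḃ_w²) + 2 c a_z ḃ_z + c²(b_w² a_z² + b_z² + b_w²). In particular, if b_z² + b_w² > 0 (or b_w a_z ≠ 0), this coefficient is positive for all sufficiently large c > 0. -/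
open Polynomial Matrix

theorem my_det_fin_four {R : Type*} [CommRing R] (M : Matrix (Fin 4) (Fin 4) R) :
    M.det =
      M 0 0 * (M 1 1 * (M 2 2 * M 3 3 - M 2 3 * M 3 2) - M 1 2 * (M 2 1 * M 3 3 - M 2 3 * M 3 1)
        + M 1 3 * (M 2 1 * M 3 2 - M 2 2 * M 3 1))
      - M 0 1 * (M 1 0 * (M 2 2 * M 3 3 - M 2 3 * M 3 2) - M 1 2 * (M 2 0 * M 3 3 - M 2 3 * M 3 0)
        + M 1 3 * (M 2 0 * M 3 2 - M 2 2 * M 3 0))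
      + M 0 2 * (M 1 0 * (M 2 1 * M 3 3 - M 2 3 * M 3 1) - M 1 1 * (M 2 0 * M 3 3 - M 2 3 * M 3 0)
        + M 1 3 * (M 2 0 * M 3 1 - M 2 1 * M 3 0))
      - M 0 3 * (M 1 0 * (M 2 1 * M 3 2 - M 2 2 * M 3 1) - M 1 1 * (M 2 0 * M 3 2 - M 2 2 * M 3 0)
        + M 1 2 * (M 2 0 * M 3 1 - M 2 1 * M 3 0)) := by
  rw [Matrix.det_succ_row_zero]
  simp [Fin.sum_univ_succ, Matrix.det_fin_three, Fin.succAbove, Matrix.submatrix,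
    show (Fin.succ 2 : Fin 4) = 3 from rfl, show (Fin.castSucc 2 : Fin 4) = 2 from rfl]
  ring

set_option maxHeartbeats 4000000 in
theorem my_coeff2 (az bz bw bz' bw' c : ℝ) :
    (!![0, 0, bz', bw';
        0, c, -bz' + c * az, -bw';
        bz', -bz' + c * az, c * (az ^ 2 + bz ^ 2), c * bz * bw;
        bw', -bw', c * bz * bw, c * bw ^ 2]).charpoly.coeff 2
      = -2 * (bz' ^ 2 + bw' ^ 2) + 2 * c * az * bz'
            + c ^ 2 * (bw ^ 2 * az ^ 2 + bz ^ 2 + bw ^ 2) := by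
  rw [Matrix.charpoly, my_det_fin_four]
  simp [charmatrix_apply, Matrix.diagonal_apply]
  ring_nf
  simp only [Polynomial.coeff_add, Polynomial.coeff_sub, Polynomial.coeff_neg,
    Polynomial.coeff_mul_ofNat, ← Polynomial.C_pow, Polynomial.coeff_mul_C,
    Polynomial.coeff_X_pow, Polynomial.coeff_X, Polynomial.coeff_C, Polynomial.coeff_one]
  norm_num
  ring

/-- The coefficient of `λ²` in the characteristic polynomial of the Hessian
matrix `H c` equals `−2(ḃ_z² + ḃ_w²) + 2c a_z ḃ_z + c²(b_w² a_z² + b_z² + b_w²)`,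
and if `b_z² + b_w² > 0` or `b_w a_z ≠ 0` it is positive for all sufficiently
large `c > 0`. -/
theorem charpoly_coeff_two (az bz bw bz' bw' : ℝ)
    (H : ℝ → Matrix (Fin 4) (Fin 4) ℝ)
    (hH : ∀ c, H c = !![0, 0, bz', bw';
                        0, c, -bz' + c * az, -bw';
                        bz', -bz' + c * az, c * (az ^ 2 + bz ^ 2), c * bz * bw;
                        bw', -bw', c * bz * bw, c * bw ^ 2]) :
    (∀ c, (H c).charpoly.coeff 2
        = -2 * (bz' ^ 2 + bw' ^ 2) + 2 * c * az * bz'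
            + c ^ 2 * (bw ^ 2 * az ^ 2 + bz ^ 2 + bw ^ 2)) ∧
    ((0 < bz ^ 2 + bw ^ 2 ∨ bw * az ≠ 0) →
      ∃ c₀ : ℝ, 0 < c₀ ∧ ∀ c ≥ c₀, 0 < (H c).charpoly.coeff 2) := by
  have key : ∀ c, (H c).charpoly.coeff 2
      = -2 * (bz' ^ 2 + bw' ^ 2) + 2 * c * az * bz'
          + c ^ 2 * (bw ^ 2 * az ^ 2 + bz ^ 2 + bw ^ 2) := by
    intro c
    rw [hH c]
    exact my_coeff2 az bz bw bz' bw' c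
  refine ⟨key, fun h => ?_⟩
  set K : ℝ := bw ^ 2 * az ^ 2 + bz ^ 2 + bw ^ 2 with hKdef
  have hK : 0 < K := by
    rcases h with h | h
    · have : 0 ≤ bw ^ 2 * az ^ 2 := by positivity
      nlinarith
    · have h2 : 0 < (bw * az) ^ 2 := by positivity
      nlinarith [sq_nonneg bz, sq_nonneg bw, sq_nonneg (bw * az)]
  refine ⟨max 1 ((2 * |az * bz'| + 2 * (bz' ^ 2 + bw' ^ 2) + 1) / K),
    lt_of_lt_of_le one_pos (le_max_left _ _), fun c hc => ?_⟩
  rw [key c]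
  have hc1 : (1 : ℝ) ≤ c := le_trans (le_max_left _ _) hc
  have hc2 : (2 * |az * bz'| + 2 * (bz' ^ 2 + bw' ^ 2) + 1) / K ≤ c :=
    le_trans (le_max_right _ _) hc
  have hcK : 2 * |az * bz'| + 2 * (bz' ^ 2 + bw' ^ 2) + 1 ≤ c * K := by
    rw [div_le_iff₀ hK] at hc2; linarith
  have habs : -(|az * bz'|) ≤ az * bz' := neg_abs_le _
  have habs' : 0 ≤ |az * bz'| := abs_nonneg _
  nlinarith [sq_nonneg bz', sq_nonneg bw', mul_le_mul_of_nonneg_left hcK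
    (le_trans zero_le_one hc1)]
end
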